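/- (An instanton that is not a solution of the noncommutative Yang–Mills equation.) Let θ ∈ ℝ, θ ≠ 0, and let B be a unital associative ℂ-*-algebra containing self-adjoint elements x¹, x², x³ with x¹x² = x²x¹, x¹x³ = x³x¹, x²x³ − x³x² = iθ·1 and x¹ ≠ 0, equipped with four pairwise commuting ℂ-linear derivations ∂₀,…,∂₃ such that ∂_μ(x^ν) = δ_{μν}·1 for μ,ν ∈ {1,2,3}, ∂₀(x^ν) = 0, and ∂_μ(b*) = (∂_μ b)*. Consider the two-photon gauge potential φ^e := −2(x¹)² + (x²)² + (x³)², A^e := (4x²x³, 2x¹x³, 6x¹x²), φ^m := 0, A^m := (0,0,0). Then: (1) D^e = H^e = (4x¹, −2x², −2x³) and D^m = H^m = (0,0,0), so the (Euclidean) anti-self-duality (instanton) conditions D^e = H^e and D^m = H^m hold; but (2) ∇·H^m = 0 while ρ^m = i[A^{e*}, D^e + H^m] = 8θx¹ ≠ 0, so the noncommutative Gauss law ∇·H^m = ρ^m fails and this instanton is not a solution of the noncommutative Yang–Mills equation. -/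

import Mathlib

/-!
Since `A^m = 0` and `φ^m = 0`, every commutator and cross-product term of the two-photon model
vanishes, so `D^e = E^e`, `H^e = ∇×A^e`, `D^m = H^m = 0`, and the instanton equations reduce to
the classical computation `-∇φ^e = ∇×A^e = (4x¹, -2x², -2x³)`. The charge is then
`ρ^m = i Σ_k [A^e_k*, E^e_k]`; as `x¹` is central among the coordinates, only the canonical
commutator `[x², x³] = iθ` survives, and it contributes `8θx¹ ≠ 0`.
-/

noncomputable section

namespace NC

variable {B : Type*} [Ring B] [Algebra ℂ B]

/-- A ℂ-linear derivation of the (possibly noncommutative) ℂ-algebra `B`,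
given as a plain function together with its defining properties. -/
structure IsDer (δ : B → B) : Prop where
  map_add : ∀ a b : B, δ (a + b) = δ a + δ b
  map_smul : ∀ (c : ℂ) (a : B), δ (c • a) = c • δ a
  leibniz : ∀ a b : B, δ (a * b) = δ a * b + a * δ b

/-- divergence `∇·X` of a triple. -/
def divg (d1 d2 d3 : B → B) (X : B × B × B) : B := d1 X.1 + d2 X.2.1 + d3 X.2.2

/-- curl `∇×X` of a triple. -/
def curl (d1 d2 d3 : B → B) (X : B × B × B) : B × B × B :=
  (d2 X.2.2 - d3 X.2.1, d3 X.1 - d1 X.2.2, d1 X.2.1 - d2 X.1)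

/-- gradient `∇a`. -/
def grad (d1 d2 d3 : B → B) (a : B) : B × B × B := (d1 a, d2 a, d3 a)

/-- apply a derivation componentwise to a triple, e.g. `∂₀X`. -/
def dmap (d0 : B → B) (X : B × B × B) : B × B × B := (d0 X.1, d0 X.2.1, d0 X.2.2)

/-- ordered cross product `X×Y` (multiplication from top to bottom). -/
def cross (X Y : B × B × B) : B × B × B :=
  (X.2.1 * Y.2.2 - X.2.2 * Y.2.1, X.2.2 * Y.1 - X.1 * Y.2.2, X.1 * Y.2.1 - X.2.1 * Y.1)

/-- componentwise commutator `[a,X] = (aX_k - X_k a)_k`. -/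
def commS (a : B) (X : B × B × B) : B × B × B :=
  (a * X.1 - X.1 * a, a * X.2.1 - X.2.1 * a, a * X.2.2 - X.2.2 * a)

/-- componentwise commutator `[X,a] = (X_k a - a X_k)_k`. -/
def commR (X : B × B × B) (a : B) : B × B × B :=
  (X.1 * a - a * X.1, X.2.1 * a - a * X.2.1, X.2.2 * a - a * X.2.2)

/-- scalar commutator `[X,Y] = Σ_k (X_k Y_k - Y_k X_k)`. -/
def commV (X Y : B × B × B) : B :=
  (X.1 * Y.1 - Y.1 * X.1) + (X.2.1 * Y.2.1 - Y.2.1 * X.2.1) +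
    (X.2.2 * Y.2.2 - Y.2.2 * X.2.2)

/-- classical part of the electric field: `E = -∂₀A - ∇φ`. -/
def Efield (d0 d1 d2 d3 : B → B) (φ : B) (A : B × B × B) : B × B × B :=
  -dmap d0 A - grad d1 d2 d3 φ

/-- classical part of the magnetic field: `Bf = ∇×A`. -/
def Bfield (d1 d2 d3 : B → B) (A : B × B × B) : B × B × B := curl d1 d2 d3 A

/-- the noncommutative electric field `D = E + i[φ,A]`. -/
def Dfield (d0 d1 d2 d3 : B → B) (φ : B) (A : B × B × B) : B × B × B :=
  Efield d0 d1 d2 d3 φ A + Complex.I • commS φ A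

/-- the noncommutative magnetic field `H = Bf + i(A×A)`. -/
def Hfield (d1 d2 d3 : B → B) (A : B × B × B) : B × B × B :=
  Bfield d1 d2 d3 A + Complex.I • cross A A

end NC


namespace NC

/-- componentwise star of a triple. -/
def starV {B : Type*} [Ring B] [StarRing B] (X : B × B × B) : B × B × B :=
  (star X.1, star X.2.1, star X.2.2)

namespace TwoPhoton

variable {B : Type*} [Ring B] [Algebra ℂ B]

/-- `K := [φ^m,A^e] + [φ^e,A^m]` (componentwise commutators). -/
def Kv (φe φm : B) (Ae Am : B × B × B) : B × B × B := commS φm Ae + commS φe Am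

/-- `C := A^e×A^m + A^m×A^e`. -/
def Cv (Ae Am : B × B × B) : B × B × B := cross Ae Am + cross Am Ae

/-- `E^e := -∂₀A^e - ∇φ^e`. -/
def Ee (d0 d1 d2 d3 : B → B) (φe : B) (Ae : B × B × B) : B × B × B :=
  -dmap d0 Ae - grad d1 d2 d3 φe

/-- `B^e := ∇×A^e`. -/
def Be (d1 d2 d3 : B → B) (Ae : B × B × B) : B × B × B := curl d1 d2 d3 Ae

/-- `B^m := -∂₀A^m - ∇φ^m`. -/
def Bm (d0 d1 d2 d3 : B → B) (φm : B) (Am : B × B × B) : B × B × B :=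
  -dmap d0 Am - grad d1 d2 d3 φm

/-- `E^m := ∇×A^m`. -/
def Em (d1 d2 d3 : B → B) (Am : B × B × B) : B × B × B := curl d1 d2 d3 Am

/-- `D^e := E^e + iK`. -/
def De (d0 d1 d2 d3 : B → B) (φe : B) (Ae : B × B × B) (φm : B) (Am : B × B × B) :
    B × B × B :=
  Ee d0 d1 d2 d3 φe Ae + Complex.I • Kv φe φm Ae Am

/-- `H^e := B^e + iC`. -/
def He (d1 d2 d3 : B → B) (Ae Am : B × B × B) : B × B × B :=
  Be d1 d2 d3 Ae + Complex.I • Cv Ae Am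

/-- `H^m := B^m + iK`. -/
def Hm (d0 d1 d2 d3 : B → B) (φe : B) (Ae : B × B × B) (φm : B) (Am : B × B × B) :
    B × B × B :=
  Bm d0 d1 d2 d3 φm Am + Complex.I • Kv φe φm Ae Am

/-- `D^m := E^m + iC`. -/
def Dm (d1 d2 d3 : B → B) (Ae Am : B × B × B) : B × B × B :=
  Em d1 d2 d3 Am + Complex.I • Cv Ae Am

end TwoPhoton


namespace TwoPhoton

/-- `ρ^m := i[A^{e*}, D^e + H^m]`. -/
def rhoM {B : Type*} [Ring B] [Algebra ℂ B] [StarRing B]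
    (d0 d1 d2 d3 : B → B) (φe : B) (Ae : B × B × B) (φm : B) (Am : B × B × B) : B :=
  Complex.I • commV (starV Ae)
    (De d0 d1 d2 d3 φe Ae φm Am + Hm d0 d1 d2 d3 φe Ae φm Am)

end TwoPhoton

namespace IsDer

variable {B : Type*} [Ring B] [Algebra ℂ B] {δ : B → B}

theorem map_zero (h : IsDer δ) : δ 0 = 0 := by
  simpa using h.map_smul 0 0

theorem map_neg (h : IsDer δ) (a : B) : δ (-a) = -δ a := by
  simpa using h.map_smul (-1) a

theorem map_one (h : IsDer δ) : δ 1 = 0 := by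
  simpa using h.leibniz 1 1

theorem map_natCast (h : IsDer δ) (n : ℕ) : δ (n : B) = 0 := by
  induction n with
  | zero => simpa using h.map_zero
  | succ k ih => rw [Nat.cast_succ, h.map_add, ih, h.map_one, zero_add]

theorem map_ofNat (h : IsDer δ) (n : ℕ) [n.AtLeastTwo] : δ (OfNat.ofNat n : B) = 0 := by
  rw [← Nat.cast_ofNat]
  exact h.map_natCast n

end IsDer

structure IsCoordinateDerivations {B : Type*} [Ring B] [Algebra ℂ B]
    (d1 d2 d3 : B → B) (x1 x2 x3 : B) : Prop where
  isDer1 : IsDer d1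
  isDer2 : IsDer d2
  isDer3 : IsDer d3
  d1_x1 : d1 x1 = 1
  d1_x2 : d1 x2 = 0
  d1_x3 : d1 x3 = 0
  d2_x1 : d2 x1 = 0
  d2_x2 : d2 x2 = 1
  d2_x3 : d2 x3 = 0
  d3_x1 : d3 x1 = 0
  d3_x2 : d3 x2 = 0
  d3_x3 : d3 x3 = 1

theorem commutator_mul_left_of_commute {B : Type*} [Ring B] {a c : B} (hac : Commute a c)
    (b : B) : b * a * c - c * (b * a) = (b * c - c * b) * a := by
  calc b * a * c - c * (b * a) = b * (a * c) - c * b * a := by noncomm_ring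
    _ = b * (c * a) - c * b * a := by rw [hac.eq]
    _ = (b * c - c * b) * a := by noncomm_ring

namespace TwoPhoton

open Complex

section VanishingMagneticPotential

variable {B : Type*} [Ring B] [Algebra ℂ B] (d0 d1 d2 d3 : B → B) (φe : B) (Ae : B × B × B)

theorem De_zero_zero : De d0 d1 d2 d3 φe Ae 0 (0, 0, 0) = Ee d0 d1 d2 d3 φe Ae := by
  simp [De, Kv, commS]

theorem He_zero : He d1 d2 d3 Ae (0, 0, 0) = curl d1 d2 d3 Ae := by
  simp [He, Be, Cv, cross]

variable {d0 d1 d2 d3}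

theorem Dm_zero (h1 : IsDer d1) (h2 : IsDer d2) (h3 : IsDer d3) :
    Dm d1 d2 d3 Ae (0, 0, 0) = 0 := by
  simp [Dm, Em, Cv, cross, curl, h1.map_zero, h2.map_zero, h3.map_zero]

theorem Hm_zero_zero (h0 : IsDer d0) (h1 : IsDer d1) (h2 : IsDer d2) (h3 : IsDer d3) :
    Hm d0 d1 d2 d3 φe Ae 0 (0, 0, 0) = 0 := by
  simp [Hm, Bm, Kv, commS, dmap, grad, h0.map_zero, h1.map_zero, h2.map_zero, h3.map_zero]

theorem divg_zero (h1 : IsDer d1) (h2 : IsDer d2) (h3 : IsDer d3) :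
    divg d1 d2 d3 (0 : B × B × B) = 0 := by
  simp [divg, h1.map_zero, h2.map_zero, h3.map_zero]

end VanishingMagneticPotential

section InstantonPotential

variable {B : Type*} [Ring B]

def instantonPhiE (x1 x2 x3 : B) : B := -(2 * (x1 * x1)) + x2 * x2 + x3 * x3

def instantonAE (x1 x2 x3 : B) : B × B × B := (4 * (x2 * x3), 2 * (x1 * x3), 6 * (x1 * x2))

theorem starV_instantonAE [StarRing B] {x1 x2 x3 : B}
    (hs1 : star x1 = x1) (hs2 : star x2 = x2) (hs3 : star x3 = x3) :
    starV (instantonAE x1 x2 x3) = (x3 * x2 * 4, x3 * x1 * 2, x2 * x1 * 6) := by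
  simp [starV, instantonAE, hs1, hs2, hs3]

end InstantonPotential

section InstantonFields

variable {B : Type*} [Ring B] [Algebra ℂ B] {d0 d1 d2 d3 : B → B} {x1 x2 x3 : B}

theorem dmap_instantonAE (hd0 : IsDer d0) (h1 : d0 x1 = 0) (h2 : d0 x2 = 0) (h3 : d0 x3 = 0) :
    dmap d0 (instantonAE x1 x2 x3) = 0 := by
  simp [dmap, instantonAE, hd0.leibniz, hd0.map_ofNat, h1, h2, h3]

theorem grad_instantonPhiE (h : IsCoordinateDerivations d1 d2 d3 x1 x2 x3) :
    grad d1 d2 d3 (instantonPhiE x1 x2 x3) = (-(4 * x1), 2 * x2, 2 * x3) := by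
  obtain ⟨hd1, hd2, hd3, h11, h12, h13, h21, h22, h23, h31, h32, h33⟩ := h
  simp only [grad, instantonPhiE, Prod.mk.injEq, hd1.map_add, hd2.map_add, hd3.map_add,
    hd1.map_neg, hd2.map_neg, hd3.map_neg, hd1.leibniz, hd2.leibniz, hd3.leibniz,
    hd1.map_ofNat, hd2.map_ofNat, hd3.map_ofNat, h11, h12, h13, h21, h22, h23, h31, h32, h33]
  refine ⟨?_, ?_, ?_⟩ <;> noncomm_ring

theorem curl_instantonAE (h : IsCoordinateDerivations d1 d2 d3 x1 x2 x3) :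
    curl d1 d2 d3 (instantonAE x1 x2 x3) = (4 * x1, -(2 * x2), -(2 * x3)) := by
  obtain ⟨hd1, hd2, hd3, h11, h12, h13, h21, h22, h23, h31, h32, h33⟩ := h
  simp only [curl, instantonAE, Prod.mk.injEq, hd1.leibniz, hd2.leibniz, hd3.leibniz,
    hd1.map_ofNat, hd2.map_ofNat, hd3.map_ofNat, h11, h12, h13, h21, h22, h23, h31, h32, h33]
  refine ⟨?_, ?_, ?_⟩ <;> noncomm_ring

theorem Ee_instanton (hd0 : IsDer d0) (h01 : d0 x1 = 0) (h02 : d0 x2 = 0) (h03 : d0 x3 = 0)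
    (h : IsCoordinateDerivations d1 d2 d3 x1 x2 x3) :
    Ee d0 d1 d2 d3 (instantonPhiE x1 x2 x3) (instantonAE x1 x2 x3) =
      (4 * x1, -(2 * x2), -(2 * x3)) := by
  simp [Ee, dmap_instantonAE hd0 h01 h02 h03, grad_instantonPhiE h]

end InstantonFields

section Charge

variable {B : Type*} [Ring B] [Algebra ℂ B] [StarRing B] {d0 d1 d2 d3 : B → B} {x1 x2 x3 : B}

theorem commV_starV_instantonAE (hs1 : star x1 = x1) (hs2 : star x2 = x2) (hs3 : star x3 = x3)
    (h12 : Commute x1 x2) (h13 : Commute x1 x3) {c : ℂ} (h23 : x2 * x3 - x3 * x2 = c • 1) :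
    commV (starV (instantonAE x1 x2 x3)) (4 * x1, -(2 * x2), -(2 * x3)) = (-8 * c) • x1 := by
  have h1 : x3 * x2 * x1 - x1 * (x3 * x2) = 0 := by
    rw [sub_eq_zero, ((h13.mul_right h12).symm).eq]
  have h2 : x3 * x1 * x2 - x2 * (x3 * x1) = -(c • x1) := by
    rw [commutator_mul_left_of_commute h12, ← neg_sub (x2 * x3), h23, neg_mul, smul_one_mul]
  have h3 : x2 * x1 * x3 - x3 * (x2 * x1) = c • x1 := by
    rw [commutator_mul_left_of_commute h13, h23, smul_one_mul]
  rw [starV_instantonAE hs1 hs2 hs3]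
  calc _ = 16 • (x3 * x2 * x1 - x1 * (x3 * x2)) - 4 • (x3 * x1 * x2 - x2 * (x3 * x1))
        - 12 • (x2 * x1 * x3 - x3 * (x2 * x1)) := by simp only [commV]; noncomm_ring
    _ = (-8 * c) • x1 := by rw [h1, h2, h3]; module

theorem rhoM_instanton {θ : ℝ} (hs1 : star x1 = x1) (hs2 : star x2 = x2) (hs3 : star x3 = x3)
    (h12 : Commute x1 x2) (h13 : Commute x1 x3) (h23 : x2 * x3 - x3 * x2 = ((θ : ℂ) * I) • 1)
    (hd0 : IsDer d0) (h01 : d0 x1 = 0) (h02 : d0 x2 = 0) (h03 : d0 x3 = 0)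
    (h : IsCoordinateDerivations d1 d2 d3 x1 x2 x3) :
    rhoM d0 d1 d2 d3 (instantonPhiE x1 x2 x3) (instantonAE x1 x2 x3) 0 (0, 0, 0) =
      (8 * (θ : ℂ)) • x1 := by
  rw [rhoM, De_zero_zero, Ee_instanton hd0 h01 h02 h03 h,
    Hm_zero_zero _ _ hd0 h.isDer1 h.isDer2 h.isDer3, add_zero,
    commV_starV_instantonAE hs1 hs2 hs3 h12 h13 h23, smul_smul]
  congr 1
  linear_combination (-8 * (θ : ℂ)) * I_mul_I

end Charge

theorem nc_instanton_not_yang_mills_general {B : Type*} [Ring B] [Algebra ℂ B] [StarRing B]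
    (θ : ℝ) (hθ : θ ≠ 0) (x1 x2 x3 : B) (hx1 : x1 ≠ 0)
    (hs1 : star x1 = x1) (hs2 : star x2 = x2) (hs3 : star x3 = x3)
    (h12 : x1 * x2 = x2 * x1) (h13 : x1 * x3 = x3 * x1)
    (h23 : x2 * x3 - x3 * x2 = ((θ : ℂ) * Complex.I) • (1 : B))
    (d0 d1 d2 d3 : B → B)
    (hd0 : IsDer d0) (hd1 : IsDer d1) (hd2 : IsDer d2) (hd3 : IsDer d3)
    (h01 : d0 x1 = 0) (h02 : d0 x2 = 0) (h03 : d0 x3 = 0)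
    (h11 : d1 x1 = 1) (h12' : d1 x2 = 0) (h13' : d1 x3 = 0)
    (h21 : d2 x1 = 0) (h22 : d2 x2 = 1) (h23' : d2 x3 = 0)
    (h31 : d3 x1 = 0) (h32 : d3 x2 = 0) (h33 : d3 x3 = 1) :
    De d0 d1 d2 d3 (-(2 * (x1 * x1)) + x2 * x2 + x3 * x3)
        (4 * (x2 * x3), 2 * (x1 * x3), 6 * (x1 * x2)) 0 (0, 0, 0) =
      (4 * x1, -(2 * x2), -(2 * x3)) ∧
    He d1 d2 d3 (4 * (x2 * x3), 2 * (x1 * x3), 6 * (x1 * x2)) (0, 0, 0) =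
      (4 * x1, -(2 * x2), -(2 * x3)) ∧
    Dm d1 d2 d3 (4 * (x2 * x3), 2 * (x1 * x3), 6 * (x1 * x2)) (0, 0, 0) = 0 ∧
    Hm d0 d1 d2 d3 (-(2 * (x1 * x1)) + x2 * x2 + x3 * x3)
        (4 * (x2 * x3), 2 * (x1 * x3), 6 * (x1 * x2)) 0 (0, 0, 0) = 0 ∧
    divg d1 d2 d3 (Hm d0 d1 d2 d3 (-(2 * (x1 * x1)) + x2 * x2 + x3 * x3)
        (4 * (x2 * x3), 2 * (x1 * x3), 6 * (x1 * x2)) 0 (0, 0, 0)) = 0 ∧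
    rhoM d0 d1 d2 d3 (-(2 * (x1 * x1)) + x2 * x2 + x3 * x3)
        (4 * (x2 * x3), 2 * (x1 * x3), 6 * (x1 * x2)) 0 (0, 0, 0) =
      (8 * (θ : ℂ)) • x1 ∧
    rhoM d0 d1 d2 d3 (-(2 * (x1 * x1)) + x2 * x2 + x3 * x3)
        (4 * (x2 * x3), 2 * (x1 * x3), 6 * (x1 * x2)) 0 (0, 0, 0) ≠ 0 ∧
    divg d1 d2 d3 (Hm d0 d1 d2 d3 (-(2 * (x1 * x1)) + x2 * x2 + x3 * x3)
        (4 * (x2 * x3), 2 * (x1 * x3), 6 * (x1 * x2)) 0 (0, 0, 0)) ≠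
      rhoM d0 d1 d2 d3 (-(2 * (x1 * x1)) + x2 * x2 + x3 * x3)
        (4 * (x2 * x3), 2 * (x1 * x3), 6 * (x1 * x2)) 0 (0, 0, 0) := by
  set φe := -(2 * (x1 * x1)) + x2 * x2 + x3 * x3
  set Ae := (4 * (x2 * x3), 2 * (x1 * x3), 6 * (x1 * x2))
  have hC : IsCoordinateDerivations d1 d2 d3 x1 x2 x3 :=
    ⟨hd1, hd2, hd3, h11, h12', h13', h21, h22, h23', h31, h32, h33⟩
  have hHm : Hm d0 d1 d2 d3 φe Ae 0 (0, 0, 0) = 0 := Hm_zero_zero φe Ae hd0 hd1 hd2 hd3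
  have hdiv : divg d1 d2 d3 (Hm d0 d1 d2 d3 φe Ae 0 (0, 0, 0)) = 0 := by
    rw [hHm]
    exact divg_zero hd1 hd2 hd3
  have hρ : rhoM d0 d1 d2 d3 φe Ae 0 (0, 0, 0) = (8 * (θ : ℂ)) • x1 :=
    rhoM_instanton hs1 hs2 hs3 h12 h13 h23 hd0 h01 h02 h03 hC
  have hρ_ne : (8 * (θ : ℂ)) • x1 ≠ 0 := smul_ne_zero (by simpa using hθ) hx1
  exact ⟨(De_zero_zero _ _ _ _ _ _).trans (Ee_instanton hd0 h01 h02 h03 hC),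
    (He_zero _ _ _ _).trans (curl_instantonAE hC), Dm_zero _ hd1 hd2 hd3, hHm, hdiv, hρ,
    hρ ▸ hρ_ne, by rw [hdiv, hρ]; exact hρ_ne.symm⟩

/-- **An instanton that is not a solution of the noncommutative Yang–Mills
equation**: on the Moyal–Weyl-type algebra with `x²x³ - x³x² = iθ·1`, `θ ≠ 0`,
the two-photon gauge potential `φ^e = -2(x¹)² + (x²)² + (x³)²`,
`A^e = (4x²x³, 2x¹x³, 6x¹x²)`, `φ^m = 0`, `A^m = (0,0,0)` satisfies the
anti-self-duality conditions `D^e = H^e = (4x¹,-2x²,-2x³)`, `D^m = H^m = 0`,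
but `∇·H^m = 0 ≠ 8θx¹ = ρ^m`, so the noncommutative Gauss law `∇·H^m = ρ^m`
fails. -/
theorem nc_instanton_not_yang_mills {B : Type*} [Ring B] [Algebra ℂ B] [StarRing B]
    (θ : ℝ) (hθ : θ ≠ 0) (x1 x2 x3 : B) (hx1 : x1 ≠ 0)
    (hs1 : star x1 = x1) (hs2 : star x2 = x2) (hs3 : star x3 = x3)
    (h12 : x1 * x2 = x2 * x1) (h13 : x1 * x3 = x3 * x1)
    (h23 : x2 * x3 - x3 * x2 = ((θ : ℂ) * Complex.I) • (1 : B))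
    (d0 d1 d2 d3 : B → B)
    (hd0 : IsDer d0) (hd1 : IsDer d1) (hd2 : IsDer d2) (hd3 : IsDer d3)
    (hcomm : ∀ δ ∈ [d0, d1, d2, d3], ∀ δ' ∈ [d0, d1, d2, d3], ∀ x : B,
      δ (δ' x) = δ' (δ x))
    (hstar : ∀ δ ∈ [d0, d1, d2, d3], ∀ b : B, δ (star b) = star (δ b))
    (h01 : d0 x1 = 0) (h02 : d0 x2 = 0) (h03 : d0 x3 = 0)
    (h11 : d1 x1 = 1) (h12' : d1 x2 = 0) (h13' : d1 x3 = 0)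
    (h21 : d2 x1 = 0) (h22 : d2 x2 = 1) (h23' : d2 x3 = 0)
    (h31 : d3 x1 = 0) (h32 : d3 x2 = 0) (h33 : d3 x3 = 1) :
    De d0 d1 d2 d3 (-(2 * (x1 * x1)) + x2 * x2 + x3 * x3)
        (4 * (x2 * x3), 2 * (x1 * x3), 6 * (x1 * x2)) 0 (0, 0, 0) =
      (4 * x1, -(2 * x2), -(2 * x3)) ∧
    He d1 d2 d3 (4 * (x2 * x3), 2 * (x1 * x3), 6 * (x1 * x2)) (0, 0, 0) =
      (4 * x1, -(2 * x2), -(2 * x3)) ∧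
    Dm d1 d2 d3 (4 * (x2 * x3), 2 * (x1 * x3), 6 * (x1 * x2)) (0, 0, 0) = 0 ∧
    Hm d0 d1 d2 d3 (-(2 * (x1 * x1)) + x2 * x2 + x3 * x3)
        (4 * (x2 * x3), 2 * (x1 * x3), 6 * (x1 * x2)) 0 (0, 0, 0) = 0 ∧
    divg d1 d2 d3 (Hm d0 d1 d2 d3 (-(2 * (x1 * x1)) + x2 * x2 + x3 * x3)
        (4 * (x2 * x3), 2 * (x1 * x3), 6 * (x1 * x2)) 0 (0, 0, 0)) = 0 ∧
    rhoM d0 d1 d2 d3 (-(2 * (x1 * x1)) + x2 * x2 + x3 * x3)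
        (4 * (x2 * x3), 2 * (x1 * x3), 6 * (x1 * x2)) 0 (0, 0, 0) =
      (8 * (θ : ℂ)) • x1 ∧
    rhoM d0 d1 d2 d3 (-(2 * (x1 * x1)) + x2 * x2 + x3 * x3)
        (4 * (x2 * x3), 2 * (x1 * x3), 6 * (x1 * x2)) 0 (0, 0, 0) ≠ 0 ∧
    divg d1 d2 d3 (Hm d0 d1 d2 d3 (-(2 * (x1 * x1)) + x2 * x2 + x3 * x3)
        (4 * (x2 * x3), 2 * (x1 * x3), 6 * (x1 * x2)) 0 (0, 0, 0)) ≠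
      rhoM d0 d1 d2 d3 (-(2 * (x1 * x1)) + x2 * x2 + x3 * x3)
        (4 * (x2 * x3), 2 * (x1 * x3), 6 * (x1 * x2)) 0 (0, 0, 0) :=
  nc_instanton_not_yang_mills_general θ hθ x1 x2 x3 hx1 hs1 hs2 hs3 h12 h13 h23 d0 d1 d2 d3 hd0 hd1
    hd2 hd3 h01 h02 h03 h11 h12' h13' h21 h22 h23' h31 h32 h33

end TwoPhoton

end NC
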